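/- arXiv:2605.11873 — 2 statements merged into one kernel-verified Lean document; each statement's English description precedes it below -/
import Mathlib

section
/- For every temporal k-path graph 𝒢 = ⊎𝒫 with source s on a distinguished base-path P_s, there exists a switch-vertex-set 𝒱 that is temporal in 𝒢 and satisfies R^𝒢(s) = R^𝒢_𝒱(s). -/
/-- A temporal edge of a directed temporal multigraph: a source, a destination,
and an integer time label. -/
structure TEdge (V : Type) where
  src : V
  dst : V
  lab : ℤ

/-- Two consecutive temporal edges form a valid step of a temporal path/walk:
the head of the first is the tail of the second, and labels strictly increase. -/
def TemporalStep {V : Type} (e f : TEdge V) : Prop :=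
  e.dst = f.src ∧ e.lab < f.lab

/-- A temporal path: a sequence of temporal edges forming a directed path with
strictly increasing labels. -/
def IsTemporalPath {V : Type} (p : List (TEdge V)) : Prop :=
  p.Chain' TemporalStep

/-- An annotated temporal walk in the temporal `k`-path graph `⊎ P`: each step
records the base-path its temporal edge comes from, edges form a directed walk
and labels strictly increase. -/
def IsAWalk {V : Type} {k : ℕ} (P : Fin k → List (TEdge V))
    (p : List (Fin k × TEdge V)) : Prop :=
  (∀ x ∈ p, x.2 ∈ P x.1) ∧ p.Chain' (fun x y => TemporalStep x.2 y.2)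

/-- `u` reaches `v` in the temporal `k`-path graph `⊎ P`. -/
def Reaches {V : Type} {k : ℕ} (P : Fin k → List (TEdge V)) (u v : V) : Prop :=
  u = v ∨ ∃ p : List (Fin k × TEdge V), p ≠ [] ∧ IsAWalk P p ∧
    (p.head?.map fun x => x.2.src) = some u ∧
    (p.getLast?.map fun x => x.2.dst) = some v

/-- The list of vertices visited by a list of temporal edges, in order. -/
def verts {V : Type} (p : List (TEdge V)) : List V :=
  p.map TEdge.src ++ (p.getLast?.map TEdge.dst).toList

/-- `v` occurs on `p` at or before `w`. -/
def le_on {V : Type} (p : List (TEdge V)) (v w : V) : Prop :=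
  ∃ m n : ℕ, m ≤ n ∧ (verts p)[m]? = some v ∧ (verts p)[n]? = some w

/-- `v` occurs on `p` strictly before `w`. -/
def lt_on {V : Type} (p : List (TEdge V)) (v w : V) : Prop :=
  ∃ m n : ℕ, m < n ∧ (verts p)[m]? = some v ∧ (verts p)[n]? = some w

/-- The edge relation of the switch tree `T_𝒱` on the base-path indices. -/
def svsEdge {V : Type} {k : ℕ} (𝒱 : Set (V × Fin k × Fin k)) (a b : Fin k) : Prop :=
  ∃ v, (v, a, b) ∈ 𝒱

/-- A switch-vertex-set (SVS) for the `k`-path graph `⊎ P` with source base-path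
index `sIdx`: a set of switches `(v, P_from, P_to)` such that (i) `P_from` has an
edge into `v` and `P_to` has an edge out of `v`; (ii) at most one switch onto each
base-path and none onto the source base-path; (iii) each switch off a base-path
occurs strictly after the switch onto it; (iv) the switches form a directed tree
rooted at the source base-path. -/
structure IsSVS {V : Type} {k : ℕ} (P : Fin k → List (TEdge V)) (sIdx : Fin k)
    (𝒱 : Set (V × Fin k × Fin k)) : Prop where
  switch_exists : ∀ ⦃v : V⦄ ⦃a b : Fin k⦄, (v, a, b) ∈ 𝒱 →
    (∃ e ∈ P a, e.dst = v) ∧ ∃ e ∈ P b, e.src = v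
  unique_onto : ∀ ⦃v v' : V⦄ ⦃a a' b : Fin k⦄,
    (v, a, b) ∈ 𝒱 → (v', a', b) ∈ 𝒱 → v = v' ∧ a = a'
  no_onto_source : ∀ ⦃v : V⦄ ⦃a : Fin k⦄, (v, a, sIdx) ∉ 𝒱
  onto_before_off : ∀ ⦃v : V⦄ ⦃a b : Fin k⦄, (v, a, b) ∈ 𝒱 →
    ∀ ⦃v' : V⦄ ⦃c : Fin k⦄, (v', b, c) ∈ 𝒱 → lt_on (P b) v v'
  tree : ∀ ⦃v : V⦄ ⦃a b : Fin k⦄, (v, a, b) ∈ 𝒱 →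
    Relation.ReflTransGen (svsEdge 𝒱) sIdx a

/-- The switch `(v, a, b)` is temporal in `⊎ P`: the edge of `P a` entering `v`
has a smaller label than the edge of `P b` leaving `v`. -/
def TemporalSwitch {V : Type} {k : ℕ} (P : Fin k → List (TEdge V))
    (v : V) (a b : Fin k) : Prop :=
  ∀ e ∈ P a, e.dst = v → ∀ f ∈ P b, f.src = v → e.lab < f.lab

/-- One step of a `𝒱`-respecting walk: if two consecutive edges come from
different base-paths, the corresponding switch belongs to `𝒱`. -/
def RespStep {V : Type} {k : ℕ} (𝒱 : Set (V × Fin k × Fin k))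
    (x y : Fin k × TEdge V) : Prop :=
  x.1 ≠ y.1 → (x.2.dst, x.1, y.1) ∈ 𝒱

/-- `u` reaches `v` in `⊎ P` by a `𝒱`-respecting temporal walk. -/
def ReachesResp {V : Type} {k : ℕ} (P : Fin k → List (TEdge V))
    (𝒱 : Set (V × Fin k × Fin k)) (u v : V) : Prop :=
  u = v ∨ ∃ p : List (Fin k × TEdge V), p ≠ [] ∧ IsAWalk P p ∧
    p.Chain' (RespStep 𝒱) ∧
    (p.head?.map fun x => x.2.src) = some u ∧
    (p.getLast?.map fun x => x.2.dst) = some v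

/-!
For every base-path `P ≠ P_s` that the source reaches, take its earliest reachable edge `e`
and an edge `f` through which some temporal walk from `s` enters `e`; `f` lies on another
base-path `P'`, and `(e.src, P', P)` is a temporal switch. Since `f` is strictly earlier than
`e`, the earliest reachable edge of `P'` is strictly earlier than that of `P`, so these
switches form a tree rooted at `P_s`. Induction along that order shows that every reachable
edge is reachable by a walk respecting the switches: respect them up to `f`, switch onto `P`
at `e.src`, and follow `P` from there.
-/

section

variable {V : Type} {k : ℕ}

theorem src_mem_verts {l : List (TEdge V)} {e : TEdge V} (he : e ∈ l) : e.src ∈ verts l :=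
  List.mem_append_left _ (List.mem_map_of_mem he)

theorem eq_of_src_eq_of_nodup_verts {l : List (TEdge V)} (hnd : (verts l).Nodup) {e f : TEdge V}
    (he : e ∈ l) (hf : f ∈ l) (h : e.src = f.src) : e = f :=
  List.inj_on_of_nodup_map (List.Nodup.of_append_left hnd) he hf h

namespace IsTemporalPath

variable {l : List (TEdge V)}

theorem pairwise (hl : IsTemporalPath l) : l.Pairwise fun e f => e.lab < f.lab :=
  have : Trans (fun e f : TEdge V => e.lab < f.lab) (fun e f : TEdge V => e.lab < f.lab)
      (fun e f : TEdge V => e.lab < f.lab) := ⟨lt_trans⟩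
  List.isChain_iff_pairwise.1 (List.IsChain.imp (fun _ _ h => h.2) hl)

theorem lab_le_lab_iff (hl : IsTemporalPath l) {m n : ℕ} (hm : m < l.length)
    (hn : n < l.length) : l[m].lab ≤ l[n].lab ↔ m ≤ n := by
  have hsorted : (l.map TEdge.lab).SortedLT :=
    List.sortedLT_iff_pairwise.2 (List.pairwise_map.2 hl.pairwise)
  have := hsorted.getElem_le_getElem_iff (hi := by simpa using hm) (hj := by simpa using hn)
  rwa [List.getElem_map, List.getElem_map] at this

theorem tail_verts (hl : IsTemporalPath l) : (verts l).tail = l.map TEdge.dst := by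
  induction l with
  | nil => rfl
  | cons e l ih =>
    cases l with
    | nil => rfl
    | cons f l =>
      obtain ⟨hef, hl⟩ := List.isChain_cons_cons.1 hl
      have hcons : ∀ g : TEdge V, verts (g :: f :: l) = g.src :: verts (f :: l) := by
        simp [verts]
      rw [hcons, List.tail_cons, List.map_cons, ← ih hl, hef.1]
      simp [verts]

theorem getElem?_verts_succ (hl : IsTemporalPath l) {n : ℕ} (hn : n < l.length) :
    (verts l)[n + 1]? = some l[n].dst := by
  rw [← List.getElem?_tail, hl.tail_verts]
  simp [hn]

theorem eq_of_dst_eq_of_nodup_verts (hl : IsTemporalPath l) (hnd : (verts l).Nodup)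
    {e f : TEdge V} (he : e ∈ l) (hf : f ∈ l) (h : e.dst = f.dst) : e = f :=
  List.inj_on_of_nodup_map (hl.tail_verts ▸ hnd.tail) he hf h

theorem lt_on_src_dst (hl : IsTemporalPath l) {e f : TEdge V} (he : e ∈ l) (hf : f ∈ l)
    (hlab : e.lab ≤ f.lab) : lt_on l e.src f.dst := by
  obtain ⟨m, hm, rfl⟩ := List.getElem_of_mem he
  obtain ⟨n, hn, rfl⟩ := List.getElem_of_mem hf
  refine ⟨m, n + 1, Nat.lt_succ_of_le ((hl.lab_le_lab_iff hm hn).1 hlab), ?_,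
    hl.getElem?_verts_succ hn⟩
  rw [verts, List.getElem?_append_left (by simpa using hm)]
  simp [hm]

end IsTemporalPath

/-- `EndsWalk P R s x`: the annotated edge `x` is the last step of a temporal walk in `⊎ P`
that starts at `s` and whose consecutive steps are related by `R`. -/
inductive EndsWalk (P : Fin k → List (TEdge V)) (R : Fin k × TEdge V → Fin k × TEdge V → Prop)
    (s : V) : Fin k × TEdge V → Prop
  | single {i : Fin k} {e : TEdge V} : e ∈ P i → e.src = s → EndsWalk P R s (i, e)
  | snoc {x y : Fin k × TEdge V} : EndsWalk P R s x → y.2 ∈ P y.1 → TemporalStep x.2 y.2 →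
      R x y → EndsWalk P R s y

namespace EndsWalk

variable {P : Fin k → List (TEdge V)} {R : Fin k × TEdge V → Fin k × TEdge V → Prop} {s : V}

theorem mem {x : Fin k × TEdge V} (hx : EndsWalk P R s x) : x.2 ∈ P x.1 := by
  cases hx with
  | single he _ => exact he
  | snoc _ hy _ _ => exact hy

theorem exists_start {x : Fin k × TEdge V} (hx : EndsWalk P R s x) :
    ∃ i, ∃ e ∈ P i, e.src = s ∧ e.lab ≤ x.2.lab := by
  induction hx with
  | single he hs => exact ⟨_, _, he, hs, le_rfl⟩
  | snoc _ _ hstep _ ih =>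
    obtain ⟨i, e, he, hs, hlab⟩ := ih
    exact ⟨i, e, he, hs, hlab.trans hstep.2.le⟩

theorem along {i : Fin k} (hP : IsTemporalPath (P i)) (hR : ∀ e e', R (i, e) (i, e'))
    {e e' : TEdge V} (hx : EndsWalk P R s (i, e)) (he' : e' ∈ P i) (hlab : e.lab ≤ e'.lab) :
    EndsWalk P R s (i, e') := by
  have he : e ∈ P i := hx.mem
  obtain ⟨m, hm, rfl⟩ := List.getElem_of_mem he
  obtain ⟨n, hn, rfl⟩ := List.getElem_of_mem he'
  induction n, (hP.lab_le_lab_iff hm hn).1 hlab using Nat.le_induction with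
  | base => exact hx
  | succ n hmn ih =>
    exact snoc (ih (by omega) (List.getElem_mem _) ((hP.lab_le_lab_iff hm _).2 hmn))
      (List.getElem_mem _) (hP.getElem n hn) (hR _ _)

theorem of_walk {p : List (Fin k × TEdge V)} (hw : IsAWalk P p) (hR : p.IsChain R)
    (hs : (p.head?.map fun x => x.2.src) = some s) {x : Fin k × TEdge V}
    (hx : p.getLast? = some x) : EndsWalk P R s x := by
  induction p using List.reverseRecOn generalizing x with
  | nil => simp at hx
  | append_singleton q y ih =>
    rw [List.getLast?_concat] at hx
    cases hx
    rw [List.isChain_append] at hR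
    have hw' := hw.2
    rw [List.Chain', List.isChain_append] at hw'
    have hy : y.2 ∈ P y.1 := hw.1 y (by simp)
    cases hq : q.getLast? with
    | none =>
      obtain rfl := List.getLast?_eq_none_iff.1 hq
      exact single hy (by simpa using hs)
    | some z =>
      have hqne : q ≠ [] := by rintro rfl; simp at hq
      refine snoc (ih ⟨fun x hx => hw.1 x (by simp [hx]), hw'.1⟩ hR.1 ?_ hq) hy
        (hw'.2.2 z hq y rfl) (hR.2.2 z hq y rfl)
      rwa [List.head?_append_of_ne_nil _ hqne] at hs

theorem exists_walk {x : Fin k × TEdge V} (hx : EndsWalk P R s x) :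
    ∃ p : List (Fin k × TEdge V), IsAWalk P p ∧ p.IsChain R ∧
      (p.head?.map fun x => x.2.src) = some s ∧ p.getLast? = some x := by
  induction hx with
  | @single i e he hs =>
    exact ⟨[(i, e)], ⟨by simpa using he, List.isChain_singleton _⟩, List.isChain_singleton _,
      by simpa using hs, rfl⟩
  | @snoc x y _ hy hstep hxy ih =>
    obtain ⟨p, ⟨hmem, hw⟩, hR, hs, hlast⟩ := ih
    have hp : p ≠ [] := by rintro rfl; simp at hlast
    refine ⟨p ++ [y], ⟨?_, ?_⟩, ?_, by rwa [List.head?_append_of_ne_nil _ hp], by simp⟩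
    · simpa [or_imp, forall_and] using ⟨fun a b h => hmem (a, b) h, hy⟩
    · rw [List.Chain', List.isChain_append]
      exact ⟨hw, List.isChain_singleton _, by simpa [hlast] using hstep⟩
    · rw [List.isChain_append]
      exact ⟨hR, List.isChain_singleton _, by simpa [hlast] using hxy⟩

end EndsWalk

section EntrySwitches

variable {P : Fin k → List (TEdge V)} {sIdx : Fin k} {s : V}

def IsFirstEdge (P : Fin k → List (TEdge V)) (s : V) (i : Fin k) (e : TEdge V) : Prop :=
  EndsWalk P ⊤ s (i, e) ∧ ∀ e', EndsWalk P ⊤ s (i, e') → e.lab ≤ e'.lab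

theorem exists_isFirstEdge {i : Fin k} {e : TEdge V} (he : EndsWalk P ⊤ s (i, e)) :
    ∃ e₀, IsFirstEdge P s i e₀ :=
  Set.exists_min_image {e | EndsWalk P ⊤ s (i, e)} TEdge.lab
    ((P i).finite_toSet.subset fun _ h => h.mem) ⟨e, he⟩

def ReachedBefore (P : Fin k → List (TEdge V)) (s : V) (a b : Fin k) : Prop :=
  ∃ f, EndsWalk P ⊤ s (a, f) ∧ ∀ e, EndsWalk P ⊤ s (b, e) → f.lab < e.lab

theorem wellFounded_reachedBefore : WellFounded (ReachedBefore P s) :=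
  haveI : IsTrans _ (ReachedBefore P s) := ⟨fun _ _ _ ⟨f, hf, hfb⟩ ⟨g, hg, hgc⟩ =>
    ⟨f, hf, fun e he => (hfb g hg).trans (hgc e he)⟩⟩
  haveI : Std.Irrefl (ReachedBefore P s) := ⟨fun _ ⟨f, hf, hff⟩ => lt_irrefl _ (hff f hf)⟩
  Finite.wellFounded_of_trans_of_irrefl _

def IsEntrySwitch (P : Fin k → List (TEdge V)) (s : V) (v : V) (a b : Fin k) : Prop :=
  ∃ f e, EndsWalk P ⊤ s (a, f) ∧ IsFirstEdge P s b e ∧ TemporalStep f e ∧ e.src = v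

theorem IsEntrySwitch.reachedBefore {v : V} {a b : Fin k} (h : IsEntrySwitch P s v a b) :
    ReachedBefore P s a b :=
  let ⟨f, _, hf, ⟨_, hmin⟩, hstep, _⟩ := h
  ⟨f, hf, fun e he => hstep.2.trans_le (hmin e he)⟩

theorem exists_isEntrySwitch (honly : ∀ i, s ∈ verts (P i) → i = sIdx) {b : Fin k}
    (hb : b ≠ sIdx) {e : TEdge V} (he : EndsWalk P ⊤ s (b, e)) :
    ∃ v a, IsEntrySwitch P s v a b := by
  obtain ⟨e₀, he₀⟩ := exists_isFirstEdge he
  rcases he₀.1 with ⟨hmem, hsrc⟩ | ⟨hx, -, hstep, -⟩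
  · exact absurd (honly b (hsrc ▸ src_mem_verts hmem)) hb
  · exact ⟨_, _, _, _, hx, he₀, hstep, rfl⟩

structure IsEntrySystem (P : Fin k → List (TEdge V)) (sIdx : Fin k) (s : V)
    (𝒱 : Set (V × Fin k × Fin k)) : Prop where
  isEntrySwitch : ∀ ⦃v : V⦄ ⦃a b : Fin k⦄, (v, a, b) ∈ 𝒱 → IsEntrySwitch P s v a b
  exists_onto : ∀ ⦃b : Fin k⦄ ⦃e : TEdge V⦄, b ≠ sIdx → EndsWalk P ⊤ s (b, e) →
    ∃ v a, (v, a, b) ∈ 𝒱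
  unique_onto : ∀ ⦃v v' : V⦄ ⦃a a' b : Fin k⦄,
    (v, a, b) ∈ 𝒱 → (v', a', b) ∈ 𝒱 → v = v' ∧ a = a'
  no_onto_source : ∀ ⦃v : V⦄ ⦃a : Fin k⦄, (v, a, sIdx) ∉ 𝒱

theorem exists_isEntrySystem (honly : ∀ i, s ∈ verts (P i) → i = sIdx) :
    ∃ 𝒱, IsEntrySystem P sIdx s 𝒱 := by
  choose v a hva using fun b (h : b ≠ sIdx ∧ ∃ e, EndsWalk P ⊤ s (b, e)) =>
    exists_isEntrySwitch honly h.1 h.2.choose_spec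
  refine ⟨Set.range fun b : {b // b ≠ sIdx ∧ ∃ e, EndsWalk P ⊤ s (b, e)} =>
    (v b.1 b.2, a b.1 b.2, b.1), ⟨?_, ?_, ?_, ?_⟩⟩
  · rintro _ _ _ ⟨⟨b, h⟩, hx⟩
    simp only [Prod.mk.injEq] at hx
    obtain ⟨rfl, rfl, rfl⟩ := hx
    exact hva b h
  · intro b e hb he
    exact ⟨_, _, ⟨b, hb, e, he⟩, rfl⟩
  · rintro _ _ _ _ _ ⟨⟨b, h⟩, hx⟩ ⟨⟨b', h'⟩, hx'⟩
    simp only [Prod.mk.injEq] at hx hx'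
    obtain ⟨rfl, rfl, rfl⟩ := hx
    obtain ⟨rfl, rfl, rfl⟩ := hx'
    exact ⟨rfl, rfl⟩
  · rintro _ _ ⟨⟨b, h⟩, hx⟩
    simp only [Prod.mk.injEq] at hx
    exact h.1 hx.2.2

namespace IsEntrySystem

variable {𝒱 : Set (V × Fin k × Fin k)}

theorem induction (h𝒱 : IsEntrySystem P sIdx s 𝒱) {motive : Fin k → Prop} (source : motive sIdx)
    (entry : ∀ ⦃v : V⦄ ⦃a b : Fin k⦄, (v, a, b) ∈ 𝒱 → motive a → motive b)
    {b : Fin k} {e : TEdge V} (he : EndsWalk P ⊤ s (b, e)) : motive b := by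
  induction b using (wellFounded_reachedBefore (P := P) (s := s)).induction generalizing e with
  | _ b ih =>
  by_cases hb : b = sIdx
  · exact hb ▸ source
  obtain ⟨v, a, hv⟩ := h𝒱.exists_onto hb he
  obtain ⟨f, -, hf, -⟩ := h𝒱.isEntrySwitch hv
  exact entry hv (ih a (h𝒱.isEntrySwitch hv).reachedBefore hf)

theorem isSVS (h𝒱 : IsEntrySystem P sIdx s 𝒱) (hP : ∀ i, IsTemporalPath (P i)) :
    IsSVS P sIdx 𝒱 where
  switch_exists := by
    intro v a b hv
    obtain ⟨f, e, hf, he, hstep, rfl⟩ := h𝒱.isEntrySwitch hv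
    exact ⟨⟨f, hf.mem, hstep.1⟩, e, he.1.mem, rfl⟩
  unique_onto := h𝒱.unique_onto
  no_onto_source := h𝒱.no_onto_source
  onto_before_off := by
    intro v a b hv v' c hv'
    obtain ⟨-, e, -, ⟨he, hmin⟩, -, rfl⟩ := h𝒱.isEntrySwitch hv
    obtain ⟨f, e', hf, -, hstep, rfl⟩ := h𝒱.isEntrySwitch hv'
    rw [← hstep.1]
    exact (hP b).lt_on_src_dst he.mem hf.mem (hmin f hf)
  tree := by
    intro v a b hv
    obtain ⟨f, -, hf, -⟩ := h𝒱.isEntrySwitch hv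
    exact h𝒱.induction .refl (fun _ _ _ hv' ih => ih.tail ⟨_, hv'⟩) hf

theorem temporalSwitch (h𝒱 : IsEntrySystem P sIdx s 𝒱) (hP : ∀ i, IsTemporalPath (P i))
    (hnd : ∀ i, (verts (P i)).Nodup) {v : V} {a b : Fin k} (hv : (v, a, b) ∈ 𝒱) :
    TemporalSwitch P v a b := by
  obtain ⟨f, e, hf, ⟨he, -⟩, hstep, rfl⟩ := h𝒱.isEntrySwitch hv
  intro f' hf' hf'dst e' he' he'src
  rw [(hP a).eq_of_dst_eq_of_nodup_verts (hnd a) hf' hf.mem (hf'dst.trans hstep.1.symm),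
    eq_of_src_eq_of_nodup_verts (hnd b) he' he.mem he'src]
  exact hstep.2

theorem endsWalk_respStep (h𝒱 : IsEntrySystem P sIdx s 𝒱) (hP : ∀ i, IsTemporalPath (P i))
    (honly : ∀ i, s ∈ verts (P i) → i = sIdx) {x : Fin k × TEdge V}
    (hx : EndsWalk P ⊤ s x) : EndsWalk P (RespStep 𝒱) s x := by
  have hR : ∀ i e e', RespStep 𝒱 (i, e) (i, e') := fun _ _ _ h => (h rfl).elim
  obtain ⟨b, e⟩ := x
  refine h𝒱.induction (motive := fun b =>
    ∀ e, EndsWalk P ⊤ s (b, e) → EndsWalk P (RespStep 𝒱) s (b, e)) ?_ ?_ hx e hx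
  · intro e he
    obtain ⟨i, h, hh, hsrc, hlab⟩ := he.exists_start
    obtain rfl := honly i (hsrc ▸ src_mem_verts hh)
    exact (EndsWalk.single hh hsrc).along (hP _) (hR _) he.mem hlab
  · intro v a b hv ih e he
    obtain ⟨f, e₀, hf, ⟨he₀, hmin⟩, hstep, rfl⟩ := h𝒱.isEntrySwitch hv
    have h₀ : EndsWalk P (RespStep 𝒱) s (b, e₀) :=
      (ih f hf).snoc he₀.mem hstep fun _ => hstep.1 ▸ hv
    exact h₀.along (hP b) (hR b) he.mem (hmin e he)

end IsEntrySystem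

end EntrySwitches

theorem Reaches.eq_or_exists_endsWalk {P : Fin k → List (TEdge V)} {u w : V}
    (h : Reaches P u w) : u = w ∨ ∃ x, EndsWalk P ⊤ u x ∧ x.2.dst = w := by
  rcases h with rfl | ⟨p, -, hw, hs, hlast⟩
  · exact .inl rfl
  obtain ⟨x, hx, rfl⟩ := Option.map_eq_some_iff.1 hlast
  exact .inr ⟨x, EndsWalk.of_walk hw (List.IsChain.imp (fun _ _ _ => trivial) hw.2) hs hx, rfl⟩

theorem ReachesResp.of_endsWalk {P : Fin k → List (TEdge V)} {𝒱 : Set (V × Fin k × Fin k)}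
    {u : V} {x : Fin k × TEdge V} (hx : EndsWalk P (RespStep 𝒱) u x) :
    ReachesResp P 𝒱 u x.2.dst := by
  obtain ⟨p, hw, hR, hs, hlast⟩ := hx.exists_walk
  exact .inr ⟨p, by rintro rfl; simp at hlast, hw, hR, hs, by simp [hlast]⟩

theorem ReachesResp.reaches {P : Fin k → List (TEdge V)} {𝒱 : Set (V × Fin k × Fin k)}
    {u w : V} (h : ReachesResp P 𝒱 u w) : Reaches P u w :=
  h.imp_right fun ⟨p, hne, hw, _, hs, hlast⟩ => ⟨p, hne, hw, hs, hlast⟩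

end

/-- For every temporal `k`-path graph `⊎ P` whose source `s`
lies on the distinguished base-path `P sIdx` (and only there), there exists a
switch-vertex-set `𝒱` that is temporal in `⊎ P` and such that the set of
vertices reachable from `s` equals the set of vertices reachable from `s` by
`𝒱`-respecting temporal walks. -/
theorem stmt3 {V : Type} {k : ℕ} (P : Fin k → List (TEdge V))
    (hP : ∀ i, IsTemporalPath (P i)) (hnd : ∀ i, (verts (P i)).Nodup)
    (sIdx : Fin k) (s : V)
    (honly : ∀ i, s ∈ verts (P i) → i = sIdx) :
    ∃ 𝒱 : Set (V × Fin k × Fin k), IsSVS P sIdx 𝒱 ∧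
      (∀ sw ∈ 𝒱, TemporalSwitch P sw.1 sw.2.1 sw.2.2) ∧
      {w | Reaches P s w} = {w | ReachesResp P 𝒱 s w} := by
  obtain ⟨𝒱, h𝒱⟩ := exists_isEntrySystem honly
  refine ⟨𝒱, h𝒱.isSVS hP, fun _ hv => h𝒱.temporalSwitch hP hnd hv,
    Set.ext fun w => ⟨fun h => ?_, ReachesResp.reaches⟩⟩
  rcases h.eq_or_exists_endsWalk with rfl | ⟨x, hx, rfl⟩
  · exact .inl rfl
  · exact .of_endsWalk (h𝒱.endsWalk_respStep hP honly hx)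
end

section
/- Applying a shifting operation ((e, t), δ) with δ > 0 to a temporal k-path graph yields the same final labeling as applying δ successive unit delaying operations to the edge e, each of the form ((e, t_cur), +1) where t_cur is the current label of e; analogously, ((e, t), δ) with δ < 0 yields the same final labeling as applying |δ| successive unit advancing operations ((e, t_cur), −1). Consequently, every temporal k-path graph obtainable from 𝒢 by a sequence of shifting operations of total cost at most b is obtainable from 𝒢 by a sequence of at most b shifting operations each of cost 1. -/
/-- Apply a shifting operation of amount `δ` to the edge at position `pos` of the
base-path `p`: the edge itself is shifted by `δ`, and the shift propagates
forwards via `max` and backwards via `min`. -/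
def shiftPath {V : Type} (p : List (TEdge V)) (pos : ℕ) (δ : ℤ) : List (TEdge V) :=
  match p[pos]? with
  | none => p
  | some e₀ =>
      p.mapIdx fun n e =>
        if n < pos then { e with lab := min e.lab (e₀.lab + δ - ((pos : ℤ) - (n : ℤ))) }
        else if n = pos then { e with lab := e₀.lab + δ }
        else { e with lab := max e.lab (e₀.lab + δ + ((n : ℤ) - (pos : ℤ))) }

/-- A shifting operation on a temporal `k`-path graph: it shifts the edge at
position `pos` of base-path `idx` by `δ` (a delay if `δ > 0`, an advance if
`δ < 0`). -/
structure ShiftOp (k : ℕ) where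
  idx : Fin k
  pos : ℕ
  δ : ℤ

/-- Apply a single shifting operation to a `k`-path graph. -/
def applyOp {V : Type} {k : ℕ} (P : Fin k → List (TEdge V)) (op : ShiftOp k) :
    Fin k → List (TEdge V) :=
  Function.update P op.idx (shiftPath (P op.idx) op.pos op.δ)

/-- Apply a sequence of shifting operations, in order. -/
def applyOps {V : Type} {k : ℕ} (P : Fin k → List (TEdge V)) (l : List (ShiftOp k)) :
    Fin k → List (TEdge V) :=
  l.foldl applyOp P

/-- The cost of a sequence of shifting operations: the sum of the absolute values
of the individual shifts. -/
def opsCost {k : ℕ} (l : List (ShiftOp k)) : ℕ :=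
  (l.map fun op => op.δ.natAbs).sum

theorem IsTemporalPath.lab_add_le {V : Type} {p : List (TEdge V)} (hp : IsTemporalPath p)
    {n m : ℕ} (hnm : n ≤ m) (hm : m < p.length) :
    (p[n]'(hnm.trans_lt hm)).lab + ((m : ℤ) - n) ≤ p[m].lab := by
  induction m, hnm using Nat.le_induction with
  | base => simp
  | succ m hnm ih =>
    have hstep := (List.isChain_iff_getElem.mp hp m hm).2
    have := ih (by omega)
    push_cast
    omega

section shiftPath

variable {V : Type}

theorem shiftPath_of_length_le (p : List (TEdge V)) {pos : ℕ} (δ : ℤ) (h : p.length ≤ pos) :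
    shiftPath p pos δ = p := by
  rw [shiftPath, List.getElem?_eq_none h]

@[simp]
theorem length_shiftPath (p : List (TEdge V)) (pos : ℕ) (δ : ℤ) :
    (shiftPath p pos δ).length = p.length := by
  unfold shiftPath
  split <;> simp

theorem getElem_shiftPath (p : List (TEdge V)) {pos : ℕ} (δ : ℤ) (hpos : pos < p.length)
    {n : ℕ} (hn : n < p.length) :
    (shiftPath p pos δ)[n]'(by simpa using hn) =
      if n < pos then { p[n] with lab := min p[n].lab (p[pos].lab + δ - ((pos : ℤ) - n)) }
      else if n = pos then { p[n] with lab := p[pos].lab + δ }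
      else { p[n] with lab := max p[n].lab (p[pos].lab + δ + ((n : ℤ) - pos)) } := by
  simp only [shiftPath, List.getElem?_eq_getElem hpos, List.getElem_mapIdx]

theorem isTemporalPath_shiftPath {p : List (TEdge V)} (hp : IsTemporalPath p) (pos : ℕ)
    (δ : ℤ) : IsTemporalPath (shiftPath p pos δ) := by
  by_cases hpos : pos < p.length
  · refine List.isChain_iff_getElem.mpr fun n hn => ?_
    simp only [length_shiftPath] at hn
    obtain ⟨hdst, hlt⟩ := List.isChain_iff_getElem.mp hp n hn
    rw [getElem_shiftPath p δ hpos (by omega), getElem_shiftPath p δ hpos hn]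
    split_ifs <;> exact ⟨hdst, by dsimp only; omega⟩
  · rwa [shiftPath_of_length_le p δ (not_lt.mp hpos)]

/-- The signs must agree: a shift in the opposite direction does not undo the propagation of
the first one. -/
theorem shiftPath_shiftPath {p : List (TEdge V)} (hp : IsTemporalPath p) (pos : ℕ) {a b : ℤ}
    (hab : 0 ≤ a ∧ 0 ≤ b ∨ a ≤ 0 ∧ b ≤ 0) :
    shiftPath (shiftPath p pos a) pos b = shiftPath p pos (a + b) := by
  by_cases hpos : pos < p.length
  · have hpos' : pos < (shiftPath p pos a).length := by simpa using hpos
    have hlab : ((shiftPath p pos a)[pos]'hpos').lab = p[pos].lab + a := by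
      simp [getElem_shiftPath p a hpos hpos]
    refine List.ext_getElem (by simp) fun n hn _ => ?_
    simp only [length_shiftPath] at hn
    rw [getElem_shiftPath _ b hpos' (by simpa using hn), hlab, getElem_shiftPath p (a + b) hpos hn,
      getElem_shiftPath p a hpos hn]
    rcases lt_trichotomy n pos with hlt | rfl | hgt
    · have := hp.lab_add_le hlt.le hpos
      simp only [if_pos hlt]
      congr 1
      omega
    · simp [add_assoc]
    · have := hp.lab_add_le hgt.le hn
      simp only [if_neg (by omega : ¬n < pos), if_neg (by omega : n ≠ pos)]
      congr 1
      omega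
  · simp only [shiftPath_of_length_le _ _ (not_lt.mp hpos)]

theorem shiftPath_zero {p : List (TEdge V)} (hp : IsTemporalPath p) (pos : ℕ) :
    shiftPath p pos 0 = p := by
  by_cases hpos : pos < p.length
  · refine List.ext_getElem (by simp) fun n hn _ => ?_
    simp only [length_shiftPath] at hn
    rw [getElem_shiftPath p 0 hpos hn]
    rcases lt_trichotomy n pos with hlt | rfl | hgt
    · have := hp.lab_add_le hlt.le hpos
      rw [if_pos hlt, min_eq_left (by omega)]
    · simp
    · have := hp.lab_add_le hgt.le hn
      rw [if_neg (by omega), if_neg (by omega), max_eq_left (by omega)]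
  · exact shiftPath_of_length_le p 0 (not_lt.mp hpos)

end shiftPath

section ShiftOp

variable {V : Type} {k : ℕ}

theorem applyOps_append (P : Fin k → List (TEdge V)) (l₁ l₂ : List (ShiftOp k)) :
    applyOps P (l₁ ++ l₂) = applyOps (applyOps P l₁) l₂ :=
  List.foldl_append

theorem isTemporalPath_applyOp {P : Fin k → List (TEdge V)} (hP : ∀ i, IsTemporalPath (P i))
    (op : ShiftOp k) (i : Fin k) : IsTemporalPath (applyOp P op i) := by
  rcases eq_or_ne i op.idx with rfl | hi
  · simpa [applyOp] using isTemporalPath_shiftPath (hP op.idx) op.pos op.δ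
  · simpa [applyOp, hi] using hP i

theorem applyOps_replicate {P : Fin k → List (TEdge V)} (hP : ∀ i, IsTemporalPath (P i))
    (i : Fin k) (pos : ℕ) (ε : ℤ) (n : ℕ) :
    applyOps P (List.replicate n ⟨i, pos, ε⟩) = applyOp P ⟨i, pos, n * ε⟩ := by
  induction n with
  | zero => simp [applyOps, applyOp, shiftPath_zero (hP i)]
  | succ n ih =>
    have hsign : 0 ≤ n * ε ∧ 0 ≤ ε ∨ n * ε ≤ 0 ∧ ε ≤ 0 := by
      rcases le_total 0 ε with h | h
      · exact .inl ⟨by positivity, h⟩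
      · exact .inr ⟨mul_nonpos_of_nonneg_of_nonpos n.cast_nonneg h, h⟩
    rw [List.replicate_succ', applyOps_append, ih]
    simp only [applyOps, List.foldl_cons, List.foldl_nil, applyOp, Function.update_self,
      Function.update_idem, shiftPath_shiftPath (hP i) pos hsign]
    push_cast
    ring_nf

def ShiftOp.unitOps (op : ShiftOp k) : List (ShiftOp k) :=
  List.replicate op.δ.natAbs ⟨op.idx, op.pos, op.δ.sign⟩

theorem applyOps_unitOps {P : Fin k → List (TEdge V)} (hP : ∀ i, IsTemporalPath (P i))
    (op : ShiftOp k) : applyOps P op.unitOps = applyOp P op := by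
  rw [ShiftOp.unitOps, applyOps_replicate hP, mul_comm, Int.sign_mul_natAbs]

theorem natAbs_δ_of_mem_unitOps {op u : ShiftOp k} (hu : u ∈ op.unitOps) : u.δ.natAbs = 1 := by
  obtain ⟨hδ, rfl⟩ := List.mem_replicate.mp hu
  exact Int.natAbs_sign_of_ne_zero (by omega)

theorem length_flatMap_unitOps (S : List (ShiftOp k)) :
    (S.flatMap ShiftOp.unitOps).length = opsCost S := by
  simp [ShiftOp.unitOps, opsCost, List.length_flatMap]

theorem applyOps_flatMap_unitOps {P : Fin k → List (TEdge V)} (hP : ∀ i, IsTemporalPath (P i))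
    (S : List (ShiftOp k)) : applyOps P (S.flatMap ShiftOp.unitOps) = applyOps P S := by
  induction S generalizing P with
  | nil => rfl
  | cons op S ih =>
    rw [List.flatMap_cons, applyOps_append, applyOps_unitOps hP,
      ih (isTemporalPath_applyOp hP op)]
    rfl

end ShiftOp

/-- On a temporal `k`-path graph, a delaying operation of
amount `δ > 0` on the edge at position `pos` of base-path `i` has the same
effect as `δ` successive unit delaying operations on that edge, and an advancing
operation of amount `δ < 0` the same effect as `|δ|` successive unit advancing
operations; consequently, every `k`-path graph obtainable by a sequence of
shifting operations of total cost at most `b` is obtainable by a sequence of at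
most `b` shifting operations, each of cost `1`. -/
theorem stmt16 {V : Type} {k : ℕ} (P : Fin k → List (TEdge V))
    (hP : ∀ i, IsTemporalPath (P i)) :
    (∀ (i : Fin k) (pos : ℕ) (δ : ℤ), 0 < δ →
      applyOps P (List.replicate δ.toNat ⟨i, pos, 1⟩) = applyOp P ⟨i, pos, δ⟩) ∧
    (∀ (i : Fin k) (pos : ℕ) (δ : ℤ), δ < 0 →
      applyOps P (List.replicate (-δ).toNat ⟨i, pos, -1⟩) = applyOp P ⟨i, pos, δ⟩) ∧
    (∀ (b : ℕ) (S : List (ShiftOp k)), opsCost S ≤ b →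
      ∃ S' : List (ShiftOp k), (∀ op ∈ S', op.δ.natAbs = 1) ∧ S'.length ≤ b ∧
        applyOps P S' = applyOps P S) := by
  refine ⟨fun i pos δ hδ => ?_, fun i pos δ hδ => ?_, fun b S hS => ?_⟩
  · rw [applyOps_replicate hP, Int.toNat_of_nonneg hδ.le, mul_one]
  · rw [applyOps_replicate hP, Int.toNat_of_nonneg (by omega), mul_neg_one, neg_neg]
  · exact ⟨S.flatMap ShiftOp.unitOps, fun _ hu => by
      obtain ⟨op, -, hu⟩ := List.mem_flatMap.mp hu
      exact natAbs_δ_of_mem_unitOps hu,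
      (length_flatMap_unitOps S).trans_le hS, applyOps_flatMap_unitOps hP S⟩
end
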